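/- arXiv:math/0412054 — 2 statements merged into one kernel-verified Lean document; each statement's English description precedes it below -/
import Mathlib

section
/- For every nonnegative integer n, the following identity of polynomials holds in ℚ[x]: Σ_{k=0}^n S(n,k) x^k = Σ_{i=0}^n (x)_i · B_{n,i}, where (x)_i = x(x−1)⋯(x−i+1) is the falling factorial, S(n,k) are the Stirling numbers of the second kind, and B_{n,i} are the partial Bell polynomials evaluated at the sequence of Bell numbers (B_1, B_2, …, B_{n−i+1}). -/
/-!
Let `f = Σ Bₙ tⁿ/n!` and `g = f - 1`, so that `Σₙ B_{n,i} tⁿ/n! = gⁱ/i!`. The Bell recurrence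
says `f' = eᵗ f`, hence `g' = eᵗ (1 + g)`, and differentiating `g^(i+1)/(i+1)!` gives
`B_{n+1,i+1} = Σₘ C(n,m) (B_{m,i} + (i+1) B_{m,i+1})`. Together with
`(x)_{i+1} + i (x)_i = x (x)_i` this shows that `P_n(x) = Σᵢ (x)ᵢ B_{n,i}` satisfies the
recurrence `P_{n+1} = x Σₘ C(n,m) Pₘ` of the exponential (Touchard) polynomials, which follows
from `S(n+1,k+1) = Σⱼ C(n,j) S(j,k)`; both sequences start at `1`.
-/

open Finset Polynomial

/-- Exponential generating function of a sequence. -/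
noncomputable def egf {R : Type*} [CommRing R] [Algebra ℚ R] (a : ℕ → R) : PowerSeries R :=
  PowerSeries.mk fun n => ((n.factorial : ℚ)⁻¹) • a n

/-- Formal composition of power series (the correct composition when the inner
series `h` has zero constant term, since then `h ^ n` has order at least `n`). -/
noncomputable def psComp {R : Type*} [CommRing R] (g h : PowerSeries R) : PowerSeries R :=
  PowerSeries.mk fun m =>
    ∑ n ∈ Finset.range (m + 1), (PowerSeries.coeff (R := R) n g) * (PowerSeries.coeff (R := R) m (h ^ n))

/-- Partial Bell polynomials of a sequence `a` (with `a 0 = 1`):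
`B_{n,k} = (n!/k!) · [t^n] (f(t) - 1)^k` where `f` is the e.g.f. of `a`. -/
noncomputable def bellPartial {R : Type*} [CommRing R] [Algebra ℚ R] (a : ℕ → R) (n k : ℕ) : R :=
  ((n.factorial : ℚ) / (k.factorial : ℚ)) • (PowerSeries.coeff (R := R) n ((egf a - 1) ^ k))

/-- Stirling numbers of the second kind. -/
def stirling2 : ℕ → ℕ → ℕ
  | 0, 0 => 1
  | 0, _ + 1 => 0
  | _ + 1, 0 => 0
  | n + 1, k + 1 => (k + 1) * stirling2 n (k + 1) + stirling2 n k

/-- Bell numbers. -/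
def bellNum (n : ℕ) : ℕ := ∑ k ∈ Finset.range (n + 1), stirling2 n k

/-- Signed Stirling numbers of the first kind, defined as the coefficients of the
falling factorial `x (x-1) ⋯ (x-n+1) = Σ_k s(n,k) x^k`. -/
noncomputable def stirling1 (n k : ℕ) : ℚ := (descPochhammer ℚ n).coeff k

section Egf

variable {R : Type*} [CommRing R] [Algebra ℚ R]

@[simp]
lemma coeff_egf (a : ℕ → R) (n : ℕ) :
    PowerSeries.coeff n (egf a) = (n.factorial : ℚ)⁻¹ • a n :=
  PowerSeries.coeff_mk _ _

lemma egf_injective : Function.Injective (egf (R := R)) := by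
  intro a b h
  funext n
  have hn := congrArg (PowerSeries.coeff n) h
  simp only [coeff_egf] at hn
  exact smul_right_injective R (inv_ne_zero (Nat.cast_ne_zero.mpr n.factorial_ne_zero)) hn

lemma egf_add (a b : ℕ → R) : egf (a + b) = egf a + egf b := by
  ext n
  simp [smul_add]

lemma egf_smul (c : ℚ) (a : ℕ → R) : egf (c • a) = c • egf a := by
  ext n
  simp [smul_comm c]

lemma derivative_egf (a : ℕ → R) :
    PowerSeries.derivative R (egf a) = egf fun n => a (n + 1) := by
  ext n
  rw [PowerSeries.coeff_derivative, coeff_egf, coeff_egf, smul_mul_assoc, ← Nat.cast_succ,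
    mul_comm, ← nsmul_eq_mul, ← Nat.cast_smul_eq_nsmul ℚ, smul_smul, Nat.factorial_succ]
  congr 1
  push_cast
  field_simp

lemma egf_mul_exp (a : ℕ → R) :
    egf a * PowerSeries.exp R = egf fun n => ∑ m ∈ range (n + 1), (n.choose m : R) * a m := by
  ext n
  rw [PowerSeries.coeff_mul, Finset.Nat.sum_antidiagonal_eq_sum_range_succ_mk, coeff_egf,
    smul_sum]
  refine sum_congr rfl fun m hm => ?_
  rw [coeff_egf, PowerSeries.coeff_exp, Algebra.algebraMap_eq_smul_one, mul_smul_comm, mul_one,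
    smul_smul, ← nsmul_eq_mul, ← Nat.cast_smul_eq_nsmul ℚ, smul_smul,
    Nat.cast_choose ℚ (mem_range_succ_iff.mp hm)]
  congr 1
  field_simp

end Egf

section BellPartial

variable {R : Type*} [CommRing R] [Algebra ℚ R]

lemma egf_bellPartial (a : ℕ → R) (k : ℕ) :
    egf (fun n => bellPartial a n k) = (k.factorial : ℚ)⁻¹ • (egf a - 1) ^ k := by
  ext n
  rw [coeff_egf, bellPartial, PowerSeries.coeff_smul, smul_smul]
  congr 1
  field_simp

lemma bellPartial_eq_zero_of_lt {a : ℕ → R} (ha : a 0 = 1) {n k : ℕ} (h : n < k) :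
    bellPartial a n k = 0 := by
  have hX : PowerSeries.X ∣ egf a - 1 := by
    rw [PowerSeries.X_dvd_iff, map_sub, ← PowerSeries.coeff_zero_eq_constantCoeff_apply]
    simp [ha]
  rw [bellPartial, PowerSeries.X_pow_dvd_iff.mp (pow_dvd_pow_of_dvd hX k) n h, smul_zero]

@[simp]
lemma bellPartial_zero_zero (a : ℕ → R) : bellPartial a 0 0 = 1 := by
  simp [bellPartial]

@[simp]
lemma bellPartial_succ_zero (a : ℕ → R) (n : ℕ) : bellPartial a (n + 1) 0 = 0 := by
  simp [bellPartial]

end BellPartial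

lemma stirling2_eq_stirlingSecond : stirling2 = Nat.stirlingSecond := by
  funext n k
  induction n generalizing k with
  | zero => cases k <;> rfl
  | succ n ih =>
    cases k with
    | zero => rfl
    | succ k => rw [stirling2, Nat.stirlingSecond_succ_succ, ih, ih]

theorem Nat.stirlingSecond_succ_succ_eq_sum_choose (n k : ℕ) :
    stirlingSecond (n + 1) (k + 1) = ∑ j ∈ range (n + 1), n.choose j * stirlingSecond j k := by
  induction n generalizing k with
  | zero => simp [stirlingSecond_succ_succ]
  | succ n ih =>
    have pascal := Finset.sum_choose_succ_mul (R := ℕ) (fun j _ => stirlingSecond j k) n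
    simp only [Nat.cast_id] at pascal
    rw [pascal, ← ih]
    cases k with
    | zero => simp [stirlingSecond_succ_succ]
    | succ k =>
      simp only [stirlingSecond_succ_succ, mul_add, sum_add_distrib, mul_left_comm _ (k + 1),
        ← mul_sum, ← ih]
      ring

section Touchard

variable (R : Type*) [CommSemiring R]

noncomputable def touchard (n : ℕ) : R[X] :=
  ∑ k ∈ range (n + 1), C (Nat.stirlingSecond n k : R) * X ^ k

variable {R}

lemma touchard_eq_sum_range_of_le {n N : ℕ} (h : n ≤ N) :
    touchard R n = ∑ k ∈ range (N + 1), C (Nat.stirlingSecond n k : R) * X ^ k :=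
  (eventually_constant_sum (fun k hk => by
    rw [Nat.stirlingSecond_eq_zero_of_lt (by omega), Nat.cast_zero, map_zero, zero_mul])
    (by omega)).symm

lemma touchard_succ (n : ℕ) :
    touchard R (n + 1) = X * ∑ m ∈ range (n + 1), (n.choose m : R[X]) * touchard R m := by
  rw [sum_congr rfl fun m hm => by
      rw [touchard_eq_sum_range_of_le (N := n) (mem_range_succ_iff.mp hm)],
    touchard, sum_range_succ', Nat.stirlingSecond_succ_zero, Nat.cast_zero, map_zero, zero_mul,
    add_zero]
  simp only [Nat.stirlingSecond_succ_succ_eq_sum_choose, Nat.cast_sum, Nat.cast_mul, map_sum,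
    sum_mul, mul_sum, map_mul, map_natCast]
  rw [sum_comm]
  refine sum_congr rfl fun m _ => sum_congr rfl fun k _ => by ring

end Touchard

@[simp]
lemma bellNum_zero : bellNum 0 = 1 := rfl

lemma bellNum_eq_eval_touchard (n : ℕ) : bellNum n = (touchard ℕ n).eval 1 := by
  simp [bellNum, touchard, eval_finsetSum, stirling2_eq_stirlingSecond]

lemma bellNum_succ (n : ℕ) :
    bellNum (n + 1) = ∑ m ∈ range (n + 1), n.choose m * bellNum m := by
  simp [bellNum_eq_eval_touchard, touchard_succ, eval_finsetSum]

local notation "β" => fun m : ℕ => (bellNum m : ℚ)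

lemma derivative_egf_bellNum :
    PowerSeries.derivative ℚ (egf β) = egf β * PowerSeries.exp ℚ := by
  rw [derivative_egf, egf_mul_exp]
  simp [bellNum_succ]

lemma bellPartial_bellNum_succ_succ (n i : ℕ) :
    bellPartial β (n + 1) (i + 1) = ∑ m ∈ range (n + 1),
      (n.choose m : ℚ) * (bellPartial β m i + (i + 1) * bellPartial β m (i + 1)) := by
  have key : egf (fun n => bellPartial β (n + 1) (i + 1)) =
      egf (fun n => bellPartial β n i + (i + 1) * bellPartial β n (i + 1)) *
        PowerSeries.exp ℚ := by
    rw [← derivative_egf (fun n => bellPartial β n (i + 1)), egf_bellPartial,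
      Derivation.map_smul, Derivation.leibniz_pow, map_sub, Derivation.map_one_eq_zero, sub_zero,
      derivative_egf_bellNum,
      show (fun n => bellPartial β n i + (i + 1) * bellPartial β n (i + 1)) =
          (fun n => bellPartial β n i) + ((i : ℚ) + 1) • fun n => bellPartial β n (i + 1)
        from rfl,
      egf_add, egf_smul, egf_bellPartial, egf_bellPartial, Nat.add_sub_cancel]
    generalize egf β = f
    obtain ⟨g, rfl⟩ : ∃ g, f = g + 1 := ⟨f - 1, by ring⟩
    rw [add_sub_cancel_right, smul_eq_mul, ← Nat.cast_smul_eq_nsmul ℚ,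
      show g ^ i * ((g + 1) * PowerSeries.exp ℚ) =
        g ^ i * PowerSeries.exp ℚ + g ^ (i + 1) * PowerSeries.exp ℚ by ring,
      add_mul, smul_mul_assoc, smul_mul_assoc, smul_mul_assoc]
    match_scalars <;> push_cast [Nat.factorial_succ] <;> field_simp
  rw [egf_mul_exp] at key
  exact congrFun (egf_injective key) n

lemma sum_descPochhammer_succ_mul_add {R : Type*} [CommRing R] (b : ℕ → R) (n : ℕ)
    (hb : b (n + 1) = 0) :
    ∑ i ∈ range (n + 1), (descPochhammer R (i + 1) * C (b i) +
        (i + 1 : R[X]) * descPochhammer R (i + 1) * C (b (i + 1))) =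
      X * ∑ i ∈ range (n + 1), descPochhammer R i * C (b i) := by
  have shift := sum_range_succ' (fun i => (i : R[X]) * descPochhammer R i * C (b i)) (n + 1)
  rw [sum_range_succ, hb, map_zero, mul_zero, add_zero, Nat.cast_zero, zero_mul, zero_mul,
    add_zero] at shift
  push_cast at shift
  rw [sum_add_distrib, ← shift, ← sum_add_distrib, mul_sum]
  refine sum_congr rfl fun i _ => ?_
  rw [descPochhammer_succ_right]
  ring

noncomputable def bellMoment (n : ℕ) : ℚ[X] :=
  ∑ i ∈ range (n + 1), descPochhammer ℚ i * C (bellPartial β n i)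

lemma bellMoment_eq_sum_range_of_le {n N : ℕ} (h : n ≤ N) :
    bellMoment n = ∑ i ∈ range (N + 1), descPochhammer ℚ i * C (bellPartial β n i) :=
  (eventually_constant_sum (fun i hi => by
    rw [bellPartial_eq_zero_of_lt (by simp) (by omega), map_zero, mul_zero])
    (by omega)).symm

lemma bellMoment_succ (n : ℕ) :
    bellMoment (n + 1) = X * ∑ m ∈ range (n + 1), (n.choose m : ℚ[X]) * bellMoment m := by
  calc bellMoment (n + 1)
      = ∑ i ∈ range (n + 1),
          descPochhammer ℚ (i + 1) * C (bellPartial β (n + 1) (i + 1)) := by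
        rw [bellMoment, sum_range_succ', bellPartial_succ_zero, map_zero, mul_zero, add_zero]
    _ = ∑ m ∈ range (n + 1), (n.choose m : ℚ[X]) * ∑ i ∈ range (n + 1),
          (descPochhammer ℚ (i + 1) * C (bellPartial β m i) +
            (i + 1 : ℚ[X]) * descPochhammer ℚ (i + 1) * C (bellPartial β m (i + 1))) := by
        simp only [bellPartial_bellNum_succ_succ, map_sum, mul_sum, map_mul, map_add]
        rw [sum_comm]
        refine sum_congr rfl fun m _ => sum_congr rfl fun i _ => ?_
        simp only [map_natCast, map_one]
        ring
    _ = X * ∑ m ∈ range (n + 1), (n.choose m : ℚ[X]) * bellMoment m := by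
        rw [mul_sum]
        refine sum_congr rfl fun m hm => ?_
        have hmn := mem_range_succ_iff.mp hm
        rw [sum_descPochhammer_succ_mul_add _ _
            (bellPartial_eq_zero_of_lt (by simp) (Nat.lt_succ_of_le hmn)),
          bellMoment_eq_sum_range_of_le hmn]
        ring

/-- The exponential polynomials equal the moments of `x.β` (the Bell polynomial umbra):
`Σ_k S(n,k) x^k = Σ_i (x)_i · B_{n,i}(B_1, B_2, …)`, where `B_{n,i}` are the partial
Bell polynomials of the Bell-number sequence. -/
theorem exponential_poly_eq_bell_moments (n : ℕ) :
    ∑ k ∈ Finset.range (n + 1), Polynomial.C (stirling2 n k : ℚ) * Polynomial.X ^ k =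
      ∑ i ∈ Finset.range (n + 1),
        descPochhammer ℚ i * Polynomial.C (bellPartial (fun m => (bellNum m : ℚ)) n i) := by
  rw [stirling2_eq_stirlingSecond]
  change touchard ℚ n = bellMoment n
  induction n using Nat.strong_induction_on with
  | _ n ih =>
    cases n with
    | zero => simp [touchard, bellMoment]
    | succ n =>
      rw [touchard_succ, bellMoment_succ]
      refine congrArg _ (sum_congr rfl fun m hm => ?_)
      rw [ih m (mem_range.mp hm)]
end

section
/- Let K be a field of characteristic zero and let (p_k)_{k≥0} be a sequence of polynomials in K[x] with p_0 = 1 and deg p_k = k for every k ≥ 1. Then (p_k) is of binomial type, i.e., p_k(x+y) = Σ_{i=0}^k C(k,i) p_i(x) p_{k−i}(y) for all k, if and only if there exists a sequence a : ℕ → K with a_0 = 1 such that p_k(x) = Σ_{i=0}^k (x)_i · B_{k,i} for all k, where B_{k,i} are the partial Bell polynomials of the sequence a and (x)_i is the falling factorial. Moreover, such a sequence (a_n)_{n≥1} is uniquely determined by (p_k). -/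
/-!
With `f` the e.g.f. of `a`, `B_{k,i} / k! = [t^k] (f - 1)^i / i!`, so the umbral polynomials
`U_k(x) = Σ_i (x)_i B_{k,i}` have e.g.f. `Σ_i C(x, i) (f - 1)^i = f^x`, and `f^(x+y) = f^x f^y`
is the binomial-type identity. Conversely, putting `y = 1` in the binomial identity expresses
`p_k(x + 1)` through `p_k(x)`, the lower `p_i` and the values `p_j(1)`; since a polynomial `d`
with `d(x + 1) = c d(x)` and `d(1) = 0` vanishes, a binomial-type sequence is determined by its
values at `1`. Hence `a_k = p_k(1)` is forced, as `U_k(1) = k! [t^k] f = a_k`.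
-/

open Finset Polynomial

open scoped Nat

lemma PowerSeries.coeff_pow_eq_zero_of_lt {S : Type*} [Semiring S] {g : PowerSeries S}
    (hg : PowerSeries.constantCoeff g = 0) {n d : ℕ} (h : n < d) :
    PowerSeries.coeff n (g ^ d) = 0 :=
  PowerSeries.coeff_of_lt_order _
    ((Nat.cast_lt.2 h).trans_le (PowerSeries.le_order_pow_of_constantCoeff_eq_zero d hg))

lemma PowerSeries.factorial_mul_coeff_mul {S : Type*} [CommSemiring S] (f g : PowerSeries S)
    (k : ℕ) :
    (k ! : S) * PowerSeries.coeff k (f * g) = ∑ i ∈ range (k + 1), (k.choose i : S) *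
      ((i ! * PowerSeries.coeff i f) * ((k - i)! * PowerSeries.coeff (k - i) g)) := by
  rw [PowerSeries.coeff_mul, Nat.sum_antidiagonal_eq_sum_range_succ_mk, mul_sum]
  refine sum_congr rfl fun i hi => ?_
  rw [← Nat.choose_mul_factorial_mul_factorial (Nat.lt_succ_iff.1 (mem_range.1 hi))]
  push_cast
  ring

lemma aeval_descPochhammer_eq_factorial_smul_choose {K R : Type*} [CommRing K] [CommRing R]
    [Algebra K R] [BinomialRing R] (x : R) (d : ℕ) :
    aeval x (descPochhammer K d) = d ! • Ring.choose x d := by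
  rw [← descPochhammer_map (algebraMap ℤ K), aeval_map_algebraMap, aeval_eq_smeval,
    Ring.descPochhammer_eq_factorial_smul_choose]

section Umbra

variable {K : Type*} [CommRing K] [Algebra ℚ K] {a : ℕ → K}

lemma constantCoeff_egf_sub_one (ha : a 0 = 1) : PowerSeries.constantCoeff (egf a - 1) = 0 := by
  simp [egf, ha]

variable (a) in
noncomputable def bellUmbra (k : ℕ) : K[X] :=
  ∑ i ∈ range (k + 1), descPochhammer K i * C (bellPartial a k i)

lemma bellUmbra_zero : bellUmbra a 0 = 1 := by
  simp [bellUmbra, bellPartial]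

lemma factorial_mul_bellPartial (k d : ℕ) :
    (d ! : K) * bellPartial a k d = k ! * PowerSeries.coeff k ((egf a - 1) ^ d) := by
  rw [bellPartial, ← nsmul_eq_mul, ← Nat.cast_smul_eq_nsmul ℚ, smul_smul,
    mul_div_cancel₀ _ (Nat.cast_ne_zero.2 d.factorial_ne_zero), Nat.cast_smul_eq_nsmul,
    nsmul_eq_mul]

section Algebra

variable {R : Type*} [CommRing R] [Algebra K R]

lemma hasSubst_map_egf_sub_one (ha : a 0 = 1) :
    PowerSeries.HasSubst ((egf a - 1).map (algebraMap K R)) := by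
  apply PowerSeries.HasSubst.of_constantCoeff_zero'
  rw [← PowerSeries.coeff_zero_eq_constantCoeff_apply, PowerSeries.coeff_map,
    PowerSeries.coeff_zero_eq_constantCoeff_apply, constantCoeff_egf_sub_one ha, map_zero]

variable [BinomialRing R]

variable (a) in
/-- The series `f(t) ^ x = Σ_i C(x, i) (f(t) - 1) ^ i` for the e.g.f. `f` of `a`. -/
noncomputable def egfPow (x : R) : PowerSeries R :=
  (PowerSeries.binomialSeries R x).subst ((egf a - 1).map (algebraMap K R))

lemma egfPow_add (ha : a 0 = 1) (x y : R) : egfPow a (x + y) = egfPow a x * egfPow a y := by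
  rw [egfPow, PowerSeries.binomialSeries_add, PowerSeries.subst_mul (hasSubst_map_egf_sub_one ha)]
  rfl

lemma egfPow_one (ha : a 0 = 1) : egfPow a (1 : R) = (egf a).map (algebraMap K R) := by
  have h := hasSubst_map_egf_sub_one (R := R) ha
  rw [egfPow, ← Nat.cast_one (R := R), PowerSeries.binomialSeries_nat, pow_one,
    ← PowerSeries.coe_substAlgHom h, map_add, map_one, PowerSeries.coe_substAlgHom h,
    PowerSeries.subst_X h, map_sub, map_one, add_sub_cancel]

lemma coeff_egfPow (ha : a 0 = 1) (x : R) (k : ℕ) :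
    PowerSeries.coeff k (egfPow a x) = ∑ d ∈ range (k + 1),
      Ring.choose x d * algebraMap K R (PowerSeries.coeff k ((egf a - 1) ^ d)) := by
  rw [egfPow, PowerSeries.coeff_subst' (hasSubst_map_egf_sub_one ha),
    finsum_eq_sum_of_support_subset (s := range (k + 1))]
  · refine sum_congr rfl fun d _ => ?_
    simp only [PowerSeries.binomialSeries_coeff, smul_eq_mul, mul_one, ← map_pow,
      PowerSeries.coeff_map]
  · refine fun d hd => by_contra fun hdk => hd ?_
    simp only [← map_pow, PowerSeries.coeff_map, PowerSeries.coeff_pow_eq_zero_of_lt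
      (constantCoeff_egf_sub_one ha) (show k < d by simpa using hdk), map_zero, smul_zero]

lemma aeval_bellUmbra (ha : a 0 = 1) (x : R) (k : ℕ) :
    aeval x (bellUmbra a k) = k ! * PowerSeries.coeff k (egfPow a x) := by
  rw [coeff_egfPow ha, bellUmbra, map_sum, mul_sum]
  refine sum_congr rfl fun d _ => ?_
  rw [map_mul, aeval_C, aeval_descPochhammer_eq_factorial_smul_choose, nsmul_eq_mul]
  calc (d ! : R) * Ring.choose x d * algebraMap K R (bellPartial a k d)
      = Ring.choose x d * algebraMap K R (d ! * bellPartial a k d) := by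
        rw [map_mul, map_natCast]; ring
    _ = _ := by rw [factorial_mul_bellPartial, map_mul, map_natCast]; ring

lemma aeval_add_bellUmbra (ha : a 0 = 1) (x y : R) (k : ℕ) :
    aeval (x + y) (bellUmbra a k) = ∑ i ∈ range (k + 1), (k.choose i : R) *
      (aeval x (bellUmbra a i) * aeval y (bellUmbra a (k - i))) := by
  simp only [aeval_bellUmbra ha, egfPow_add ha, PowerSeries.factorial_mul_coeff_mul]

end Algebra

end Umbra

lemma Polynomial.eq_zero_of_comp_X_add_one_eq_C_mul {K : Type*} [CommRing K] [IsDomain K]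
    [CharZero K] {d : K[X]} {c : K} (hd : d.comp (X + 1) = C c * d) (h1 : d.eval 1 = 0) :
    d = 0 := by
  have hroot : ∀ n : ℕ, d.IsRoot (n + 1 : K) := by
    intro n
    induction n with
    | zero => simpa using h1
    | succ n ih =>
      have h := congrArg (eval (n + 1 : K)) hd
      rw [eval_comp, eval_mul, ih.eq_zero, mul_zero] at h
      simpa [add_assoc, one_add_one_eq_two] using h
  exact eq_zero_of_infinite_isRoot d
    (Set.infinite_of_injective_forall_mem (fun m n h => by simpa using h) hroot)

section BinomialType

variable {K : Type*} [CommRing K] {p q : ℕ → K[X]}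

variable (p) in
/-- `C X` and `X` are the two independent variables `x` and `y` of `K[X][X]`. -/
def IsBinomialType : Prop :=
  ∀ k : ℕ, aeval (C X + X : K[X][X]) (p k) = ∑ i ∈ range (k + 1), (k.choose i : K[X][X]) *
    (aeval (C X : K[X][X]) (p i) * aeval (X : K[X][X]) (p (k - i)))

lemma IsBinomialType.aeval_add (hp : IsBinomialType p) {R : Type*} [CommRing R] [Algebra K R]
    (x y : R) (k : ℕ) :
    aeval (x + y) (p k) =
      ∑ i ∈ range (k + 1), (k.choose i : R) * (aeval x (p i) * aeval y (p (k - i))) := by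
  have h := congrArg (aevalTower (aeval x) y) (hp k)
  simpa only [← aeval_algHom_apply, map_add, map_sum, map_mul, map_natCast, aevalTower_C,
    aevalTower_X, aeval_X] using h

lemma IsBinomialType.comp_X_add_one (hp : IsBinomialType p) (k : ℕ) :
    (p k).comp (X + 1) =
      ∑ i ∈ range (k + 1), (k.choose i : K[X]) * (p i * C ((p (k - i)).eval 1)) := by
  rw [comp_eq_aeval, hp.aeval_add]
  refine sum_congr rfl fun i _ => ?_
  rw [aeval_X_left_apply, ← map_one (algebraMap K K[X]),
    aeval_algebraMap_apply_eq_algebraMap_eval, algebraMap_eq]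

lemma IsBinomialType.eq_of_eval_one [IsDomain K] [CharZero K] (hp : IsBinomialType p)
    (hq : IsBinomialType q) (h0 : p 0 = q 0) (h1 : ∀ k, (p k).eval 1 = (q k).eval 1) :
    p = q := by
  funext k
  induction k using Nat.strong_induction_on with
  | _ k ih =>
    rcases k with _ | k
    · exact h0
    refine sub_eq_zero.1 (eq_zero_of_comp_X_add_one_eq_C_mul (c := (q 0).eval 1) ?_
      (by rw [eval_sub, h1, sub_self]))
    have hlow :
        ∑ i ∈ range (k + 1), ((k + 1).choose i : K[X]) * (p i * C ((p (k + 1 - i)).eval 1)) =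
          ∑ i ∈ range (k + 1), ((k + 1).choose i : K[X]) * (q i * C ((q (k + 1 - i)).eval 1)) :=
      sum_congr rfl fun i hi => by rw [ih i (mem_range.1 hi), h1]
    rw [sub_comp, hp.comp_X_add_one, hq.comp_X_add_one, sum_range_succ _ (k + 1),
      sum_range_succ _ (k + 1), hlow, Nat.choose_self, Nat.sub_self, h1 0]
    ring

end BinomialType

section Field

variable {K : Type*} [Field K] [CharZero K] {a : ℕ → K}

lemma eval_one_bellUmbra (ha : a 0 = 1) (k : ℕ) : (bellUmbra a k).eval 1 = a k := by
  rw [← coe_aeval_eq_eval, aeval_bellUmbra ha, egfPow_one ha, PowerSeries.coeff_map, egf,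
    PowerSeries.coeff_mk, Algebra.algebraMap_self, RingHom.id_apply, ← nsmul_eq_mul,
    ← Nat.cast_smul_eq_nsmul ℚ, smul_smul,
    mul_inv_cancel₀ (Nat.cast_ne_zero.2 k.factorial_ne_zero), one_smul]

lemma isBinomialType_bellUmbra (ha : a 0 = 1) : IsBinomialType (bellUmbra a) :=
  fun k => aeval_add_bellUmbra ha _ _ k

end Field

theorem binomial_type_iff_partition_umbra_general (K : Type*) [Field K] [CharZero K]
    (p : ℕ → Polynomial K) (hp0 : p 0 = 1) :
    (∀ k : ℕ,
      Polynomial.aeval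
          (Polynomial.C Polynomial.X + Polynomial.X : Polynomial (Polynomial K)) (p k) =
        ∑ i ∈ Finset.range (k + 1), (k.choose i : Polynomial (Polynomial K)) *
          (Polynomial.aeval (Polynomial.C Polynomial.X : Polynomial (Polynomial K)) (p i) *
            Polynomial.aeval (Polynomial.X : Polynomial (Polynomial K)) (p (k - i)))) ↔
      (∃! a : ℕ → K, a 0 = 1 ∧ ∀ k : ℕ, p k = ∑ i ∈ Finset.range (k + 1),
        descPochhammer K i * Polynomial.C (bellPartial a k i)) := by
  change IsBinomialType p ↔ ∃! a : ℕ → K, a 0 = 1 ∧ ∀ k, p k = bellUmbra a k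
  constructor
  · intro hp
    set a : ℕ → K := fun k => (p k).eval 1
    have ha : a 0 = 1 := by simp [a, hp0]
    have hpa : p = bellUmbra a := hp.eq_of_eval_one (isBinomialType_bellUmbra ha)
      (by rw [hp0, bellUmbra_zero]) fun k => (eval_one_bellUmbra ha k).symm
    refine ⟨a, ⟨ha, congrFun hpa⟩, fun b ⟨hb0, hb⟩ => funext fun k => ?_⟩
    rw [← eval_one_bellUmbra hb0, ← hb]
  · rintro ⟨a, ⟨ha, hpa⟩, -⟩
    exact funext hpa ▸ isBinomialType_bellUmbra ha

/-- A polynomial sequence `p_k` (with `p 0 = 1`, `deg p_k = k`) is of binomial type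
iff it is umbrally represented as `p_k(x) = Σ_i (x)_i B_{k,i}(a)` for a (unique)
sequence `a` with `a 0 = 1`. -/
theorem binomial_type_iff_partition_umbra (K : Type*) [Field K] [CharZero K]
    (p : ℕ → Polynomial K) (hp0 : p 0 = 1)
    (hdeg : ∀ k : ℕ, 1 ≤ k → (p k).natDegree = k) :
    (∀ k : ℕ,
      Polynomial.aeval
          (Polynomial.C Polynomial.X + Polynomial.X : Polynomial (Polynomial K)) (p k) =
        ∑ i ∈ Finset.range (k + 1), (k.choose i : Polynomial (Polynomial K)) *
          (Polynomial.aeval (Polynomial.C Polynomial.X : Polynomial (Polynomial K)) (p i) *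
            Polynomial.aeval (Polynomial.X : Polynomial (Polynomial K)) (p (k - i)))) ↔
      (∃! a : ℕ → K, a 0 = 1 ∧ ∀ k : ℕ, p k = ∑ i ∈ Finset.range (k + 1),
        descPochhammer K i * Polynomial.C (bellPartial a k i)) :=
  binomial_type_iff_partition_umbra_general K p hp0
end
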